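/- Let n ≥ 1 and consider the polynomial ring ℂ[x_{ij} : 1 ≤ i ≤ j ≤ n] of polynomial functions on 𝔟. A polynomial f in this ring satisfies f(u₁ · X · u₂⁻¹) = f(X) for all u₁, u₂ ∈ U and all X ∈ 𝔟 if and only if f lies in the ℂ-subalgebra ℂ[x₁₁, x₂₂, …, xₙₙ] generated by the diagonal coordinate functions. In particular, the invariant algebra of this two-sided unipotent action on 𝔟 is isomorphic as a ℂ-algebra to a polynomial ring in n variables. -/

import Mathlib

/-- `UT n X` : `X` is an `n × n` upper triangular complex matrix (an element of 𝔟). -/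
def UT (n : ℕ) (X : Matrix (Fin n) (Fin n) ℂ) : Prop :=
  ∀ i j : Fin n, (j : ℕ) < (i : ℕ) → X i j = 0

/-- `Unip n u` : `u` is a unipotent upper triangular matrix (an element of `U`). -/
def Unip (n : ℕ) (u : Matrix (Fin n) (Fin n) ℂ) : Prop :=
  UT n u ∧ ∀ i : Fin n, u i i = 1

/-- Index set of the coordinates `x_{i,j}` (`i ≤ j`) of an upper triangular matrix. -/
abbrev UIdx (n : ℕ) := {p : Fin n × Fin n // p.1 ≤ p.2}

/-- The invariant subalgebra of `ℂ[x_{ij} : i ≤ j]` for the two-sided unipotent action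
`(u₁, u₂) • X = u₁ · X · u₂⁻¹` on 𝔟 (the filtered representation space of the `A₁`-Dynkin
quiver with dimension vector `(n, n)`). -/
noncomputable def invSubA1 (n : ℕ) : Subalgebra ℂ (MvPolynomial (UIdx n) ℂ) where
  carrier := { f | ∀ u₁ u₂ X : Matrix (Fin n) (Fin n) ℂ,
      Unip n u₁ → Unip n u₂ → UT n X →
      MvPolynomial.eval (fun s => (u₁ * X * u₂⁻¹) s.1.1 s.1.2) f =
      MvPolynomial.eval (fun s => X s.1.1 s.1.2) f }
  mul_mem' := by
    intro f g hf hg u₁ u₂ X hu₁ hu₂ hX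
    simp only [Set.mem_setOf_eq, map_mul] at *
    rw [hf u₁ u₂ X hu₁ hu₂ hX, hg u₁ u₂ X hu₁ hu₂ hX]
  one_mem' := by intro u₁ u₂ X hu₁ hu₂ hX; simp
  add_mem' := by
    intro f g hf hg u₁ u₂ X hu₁ hu₂ hX
    simp only [Set.mem_setOf_eq, map_add] at *
    rw [hf u₁ u₂ X hu₁ hu₂ hX, hg u₁ u₂ X hu₁ hu₂ hX]
  zero_mem' := by intro u₁ u₂ X hu₁ hu₂ hX; simp
  algebraMap_mem' := by
    intro c u₁ u₂ X hu₁ hu₂ hX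
    simp [MvPolynomial.algebraMap_eq]

/-!
The diagonal entries of `u₁ X u₂⁻¹` are those of `X`, so every polynomial in the diagonal
coordinates is invariant. Conversely, an upper triangular `X` with invertible diagonal `D` factors
as `X = D u` with `u` unipotent, so an invariant `f` satisfies `f(X) = f(X u⁻¹) = f(D)`. Thus `f` and its
restriction to the diagonal agree wherever all coordinates are nonzero, a product of infinite sets,
hence they are equal polynomials.
-/

open MvPolynomial Matrix

theorem Matrix.IsUpperTriangular.mul_apply_self {m R : Type*} [LinearOrder m] [Fintype m]
    [NonUnitalNonAssocSemiring R] {A B : Matrix m m R} (hA : A.IsUpperTriangular)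
    (hB : B.IsUpperTriangular) (i : m) : (A * B) i i = A i i * B i i := by
  rw [mul_apply]
  refine Finset.sum_eq_single i (fun k _ hk => ?_) (by simp)
  rcases lt_or_gt_of_ne hk with h | h
  · rw [hA h, zero_mul]
  · rw [hB h, mul_zero]

section Triangular

variable {n : ℕ} {u u₁ u₂ X : Matrix (Fin n) (Fin n) ℂ}

theorem UT.isUpperTriangular (hX : UT n X) : X.IsUpperTriangular :=
  fun i j hij => hX i j hij

theorem UT.of_isUpperTriangular (hX : X.IsUpperTriangular) : UT n X :=
  fun _ _ hij => hX hij

theorem Unip.det_eq_one (hu : Unip n u) : u.det = 1 := by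
  rw [det_of_isUpperTriangular hu.1.isUpperTriangular]
  simp [hu.2]

theorem Unip.isUnit_det (hu : Unip n u) : IsUnit u.det :=
  hu.det_eq_one ▸ isUnit_one

theorem Unip.inv (hu : Unip n u) : Unip n u⁻¹ := by
  have := u.invertibleOfIsUnitDet hu.isUnit_det
  have hinv : u⁻¹.IsUpperTriangular :=
    blockTriangular_inv_of_blockTriangular hu.1.isUpperTriangular
  refine ⟨.of_isUpperTriangular hinv, fun i => ?_⟩
  have h := hu.1.isUpperTriangular.mul_apply_self hinv i
  rwa [mul_nonsing_inv u hu.isUnit_det, one_apply_eq, hu.2 i, one_mul, eq_comm] at h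

theorem Unip.mul_mul_inv_apply_self (hu₁ : Unip n u₁) (hu₂ : Unip n u₂) (hX : UT n X)
    (i : Fin n) : (u₁ * X * u₂⁻¹) i i = X i i := by
  have hu₂' := hu₂.inv
  have hu₁X : (u₁ * X).IsUpperTriangular := hu₁.1.isUpperTriangular.mul hX.isUpperTriangular
  rw [hu₁X.mul_apply_self hu₂'.1.isUpperTriangular,
    hu₁.1.isUpperTriangular.mul_apply_self hX.isUpperTriangular, hu₁.2 i, hu₂'.2 i, one_mul, mul_one]

theorem UT.exists_unip_mul_inv_eq_diagonal (hX : UT n X) (hd : ∀ i, X i i ≠ 0) :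
    ∃ u, Unip n u ∧ X * u⁻¹ = diagonal X.diag := by
  set u := diagonal (fun i => (X i i)⁻¹) * X
  have hu : Unip n u := by
    refine ⟨fun i j hij => ?_, fun i => ?_⟩
    · simp [u, diagonal_mul, hX i j hij]
    · simp [u, diagonal_mul, hd i]
  have hXu : diagonal X.diag * u = X := by
    rw [← Matrix.mul_assoc, diagonal_mul_diagonal]
    simp [hd]
  refine ⟨u, hu, ?_⟩
  calc X * u⁻¹ = diagonal X.diag * u * u⁻¹ := by rw [hXu]
    _ = diagonal X.diag := by rw [Matrix.mul_assoc, mul_nonsing_inv u hu.isUnit_det, Matrix.mul_one]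

end Triangular

variable {n : ℕ}

def diagIdx (n : ℕ) (i : Fin n) : UIdx n := ⟨(i, i), le_rfl⟩

theorem diagIdx_injective : Function.Injective (diagIdx n) :=
  fun _ _ h => congrArg (fun s : UIdx n => s.1.1) h

theorem adjoin_X_diag_eq_range_rename :
    Algebra.adjoin ℂ {p : MvPolynomial (UIdx n) ℂ | ∃ i : Fin n, p = X ⟨(i, i), le_rfl⟩} =
      (rename (diagIdx n)).range := by
  have hgen : {p : MvPolynomial (UIdx n) ℂ | ∃ i : Fin n, p = X ⟨(i, i), le_rfl⟩} =
      Set.range (X ∘ diagIdx n) := by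
    ext p
    exact ⟨fun ⟨i, h⟩ => ⟨i, h.symm⟩, fun ⟨i, h⟩ => ⟨i, h.symm⟩⟩
  rw [hgen, Algebra.adjoin_range_eq_range_aeval, rename_eq_aeval]

theorem adjoin_X_diag_le_invSubA1 :
    Algebra.adjoin ℂ {p : MvPolynomial (UIdx n) ℂ | ∃ i : Fin n, p = X ⟨(i, i), le_rfl⟩} ≤
      invSubA1 n := by
  refine Algebra.adjoin_le ?_
  rintro _ ⟨i, rfl⟩ u₁ u₂ X hu₁ hu₂ hX
  simpa only [eval_X] using hu₁.mul_mul_inv_apply_self hu₂ hX i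

def matrixOfCoords (v : UIdx n → ℂ) : Matrix (Fin n) (Fin n) ℂ :=
  of fun i j => if h : i ≤ j then v ⟨(i, j), h⟩ else 0

theorem uT_matrixOfCoords (v : UIdx n → ℂ) : UT n (matrixOfCoords v) :=
  fun _ _ hij => dif_neg (not_le.2 hij)

theorem matrixOfCoords_apply (v : UIdx n → ℂ) (s : UIdx n) :
    matrixOfCoords v s.1.1 s.1.2 = v s :=
  dif_pos s.2

/-- Restriction of polynomial functions on `𝔟` to the diagonal matrices. -/
noncomputable def diagRestrict (n : ℕ) : MvPolynomial (UIdx n) ℂ →ₐ[ℂ] MvPolynomial (Fin n) ℂ :=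
  bind₁ fun s => if s.1.1 = s.1.2 then X s.1.1 else 0

theorem eval_rename_diagRestrict (v : UIdx n → ℂ) (f : MvPolynomial (UIdx n) ℂ) :
    eval v (rename (diagIdx n) (diagRestrict n f)) =
      eval (fun s => diagonal (v ∘ diagIdx n) s.1.1 s.1.2) f := by
  rw [eval_rename, ← coe_aeval_eq_eval, ← coe_aeval_eq_eval]
  refine (aeval_bind₁ _ _ f).trans (congrArg (aeval · f) (funext fun s => ?_))
  by_cases hs : s.1.1 = s.1.2 <;> simp [hs, diagIdx]

theorem eq_rename_diagRestrict_of_mem_invSubA1 {f : MvPolynomial (UIdx n) ℂ}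
    (hf : f ∈ invSubA1 n) : f = rename (diagIdx n) (diagRestrict n f) := by
  refine funext_set (fun _ => {0}ᶜ) (fun _ => (Set.finite_singleton 0).infinite_compl)
    fun v hv => ?_
  set M := matrixOfCoords v
  have hdiag : M.diag = v ∘ diagIdx n := funext fun i => matrixOfCoords_apply v (diagIdx n i)
  obtain ⟨u, hu, hMu⟩ := (uT_matrixOfCoords v).exists_unip_mul_inv_eq_diagonal
    fun i => show M.diag i ≠ 0 by rw [hdiag]; exact hv (diagIdx n i) trivial
  have hinv := hf 1 u M ⟨.of_isUpperTriangular blockTriangular_one, one_apply_eq⟩ hu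
    (uT_matrixOfCoords v)
  rw [Matrix.one_mul, hMu, hdiag] at hinv
  rw [eval_rename_diagRestrict, hinv]
  simp only [M, matrixOfCoords_apply]

theorem invSubA1_eq_adjoin_X_diag :
    invSubA1 n =
      Algebra.adjoin ℂ {p : MvPolynomial (UIdx n) ℂ | ∃ i : Fin n, p = X ⟨(i, i), le_rfl⟩} := by
  refine le_antisymm (fun f hf => ?_) adjoin_X_diag_le_invSubA1
  rw [adjoin_X_diag_eq_range_rename, eq_rename_diagRestrict_of_mem_invSubA1 hf]
  exact AlgHom.mem_range_self _ _

theorem A1_unipotent_invariants_general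
    (n : ℕ) :
    (∀ f : MvPolynomial (UIdx n) ℂ,
      (∀ u₁ u₂ X : Matrix (Fin n) (Fin n) ℂ,
        Unip n u₁ → Unip n u₂ → UT n X →
        MvPolynomial.eval (fun s => (u₁ * X * u₂⁻¹) s.1.1 s.1.2) f =
        MvPolynomial.eval (fun s => X s.1.1 s.1.2) f) ↔
      f ∈ Algebra.adjoin ℂ
        {p : MvPolynomial (UIdx n) ℂ | ∃ i : Fin n, p = MvPolynomial.X ⟨(i, i), le_rfl⟩}) ∧
    Nonempty (invSubA1 n ≃ₐ[ℂ] MvPolynomial (Fin n) ℂ) := by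
  have hrange : invSubA1 n = (rename (diagIdx n)).range :=
    invSubA1_eq_adjoin_X_diag.trans adjoin_X_diag_eq_range_rename
  refine ⟨fun f => SetLike.ext_iff.1 invSubA1_eq_adjoin_X_diag f, ?_⟩
  exact ⟨(Subalgebra.equivOfEq _ _ hrange).trans
    (AlgEquiv.ofInjective _ (rename_injective _ diagIdx_injective)).symm⟩

/-- **Proposition 3.1.** A polynomial `f ∈ ℂ[x_{ij} : 1 ≤ i ≤ j ≤ n]` satisfies
`f(u₁ X u₂⁻¹) = f(X)` for all unipotent `u₁, u₂` and all upper triangular `X` if and only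
if `f` lies in the ℂ-subalgebra generated by the diagonal coordinates `x₁₁, …, xₙₙ`; in
particular, the invariant algebra is isomorphic as a ℂ-algebra to a polynomial ring in `n`
variables. -/
theorem A1_unipotent_invariants
    (n : ℕ) (hn : 1 ≤ n) :
    (∀ f : MvPolynomial (UIdx n) ℂ,
      (∀ u₁ u₂ X : Matrix (Fin n) (Fin n) ℂ,
        Unip n u₁ → Unip n u₂ → UT n X →
        MvPolynomial.eval (fun s => (u₁ * X * u₂⁻¹) s.1.1 s.1.2) f =
        MvPolynomial.eval (fun s => X s.1.1 s.1.2) f) ↔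
      f ∈ Algebra.adjoin ℂ
        {p : MvPolynomial (UIdx n) ℂ | ∃ i : Fin n, p = MvPolynomial.X ⟨(i, i), le_rfl⟩}) ∧
    Nonempty (invSubA1 n ≃ₐ[ℂ] MvPolynomial (Fin n) ℂ) :=
  A1_unipotent_invariants_general n
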